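/- arXiv:1809.08026 — 5 statements merged into one kernel-verified Lean document; each statement's English description precedes it below -/
import Mathlib

section
/- Let E ⊂ ℂ be a compact set, s > 0, and let μ be a positive Borel measure supported on E satisfying μ(B(z,r)) ≤ r^s for all z ∈ ℂ and r > 0. Then for every z ∈ ℂ, the logarithmic potential satisfies U_μ(z) = ∫ log(1/|z−w|) dμ(w) ≤ (μ(E)/s)·(1 + log(1/μ(E))), provided μ(E) ≤ 1. -/
/-!
By the layer-cake formula, `U_μ(z) ≤ ∫₀^∞ μ{w : log (1/|z-w|) > t} dt`. The superlevel set
at height `t` lies in the ball of radius `e^{-t}` about `z`, so the integrand is at most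
`min (μ(E), e^{-st})`. Bounding it by `μ(E)` on `(0, τ]` and by `e^{-st}` beyond gives
`μ(E) τ + e^{-sτ}/s`, which is minimised at `e^{-sτ} = μ(E)`, i.e. `τ = log (1/μ(E)) / s`.
-/

open MeasureTheory Set Real

lemma lintegral_Ioi_ofReal_exp_neg_mul {s : ℝ} (hs : 0 < s) (τ : ℝ) :
    ∫⁻ t in Ioi τ, ENNReal.ofReal (exp (-s * t)) = ENNReal.ofReal (exp (-s * τ) / s) := by
  rw [← ofReal_integral_eq_lintegral_ofReal (exp_neg_integrableOn_Ioi τ hs)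
      (ae_of_all _ fun t => (exp_pos _).le), integral_exp_mul_Ioi (neg_neg_of_pos hs),
    neg_div_neg_eq]

lemma integral_le_toReal_lintegral_ofReal {α : Type*} [MeasurableSpace α] (μ : Measure α)
    (f : α → ℝ) : ∫ a, f a ∂μ ≤ (∫⁻ a, ENNReal.ofReal (f a) ∂μ).toReal := by
  by_cases hf : Integrable f μ
  · rw [integral_eq_lintegral_pos_part_sub_lintegral_neg_part hf]
    exact sub_le_self _ ENNReal.toReal_nonneg
  · rw [integral_undef hf]
    exact ENNReal.toReal_nonneg

lemma lintegral_ofReal_le_of_meas_lt_le_exp {α : Type*} [MeasurableSpace α] {μ : Measure α}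
    {f : α → ℝ} (hf : AEMeasurable f μ) {s τ : ℝ} (hs : 0 < s) (hτ : 0 ≤ τ)
    (htail : ∀ t, τ < t → μ {a | t < f a} ≤ ENNReal.ofReal (exp (-s * t))) :
    ∫⁻ a, ENNReal.ofReal (f a) ∂μ ≤
      μ univ * ENNReal.ofReal τ + ENNReal.ofReal (exp (-s * τ) / s) := by
  have hlevel : ∀ t, 0 < t → {a | t < max (f a) 0} = {a | t < f a} := fun t ht => by
    ext a
    simp [ht.not_gt]
  calc ∫⁻ a, ENNReal.ofReal (f a) ∂μ
        = ∫⁻ a, ENNReal.ofReal (max (f a) 0) ∂μ := by simp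
    _ = ∫⁻ t in Ioi 0, μ {a | t < max (f a) 0} :=
      lintegral_eq_lintegral_meas_lt μ (ae_of_all _ fun a => le_max_right _ _)
        (hf.max aemeasurable_const)
    _ = (∫⁻ t in Ioc 0 τ, μ {a | t < max (f a) 0}) +
          ∫⁻ t in Ioi τ, μ {a | t < max (f a) 0} := by
      rw [← Ioc_union_Ioi_eq_Ioi hτ, lintegral_union measurableSet_Ioi (Ioc_disjoint_Ioi le_rfl)]
    _ ≤ (∫⁻ _ in Ioc 0 τ, μ univ) + ∫⁻ t in Ioi τ, ENNReal.ofReal (exp (-s * t)) := by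
      refine add_le_add
        (setLIntegral_mono measurable_const fun _ _ => measure_mono (subset_univ _))
        (setLIntegral_mono (by fun_prop) fun t ht => ?_)
      rw [hlevel t (hτ.trans_lt ht)]
      exact htail t ht
    _ = μ univ * ENNReal.ofReal τ + ENNReal.ofReal (exp (-s * τ) / s) := by
      rw [setLIntegral_const, Real.volume_Ioc, sub_zero, lintegral_Ioi_ofReal_exp_neg_mul hs]

lemma setOf_lt_log_one_div_dist_subset_ball {X : Type*} [PseudoMetricSpace X] (z : X)
    (t : ℝ) :
    {w | t < log (1 / dist z w)} ⊆ Metric.ball z (exp (-t)) := by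
  intro w hw
  rw [Metric.mem_ball, dist_comm]
  rcases (dist_nonneg : 0 ≤ dist z w).eq_or_lt with h | h
  · rw [← h]
    exact exp_pos _
  · rw [mem_ofPred_eq, one_div, log_inv, lt_neg] at hw
    exact (log_lt_iff_lt_exp h).1 hw

lemma measure_lt_log_one_div_dist_le {X : Type*} [PseudoMetricSpace X] [MeasurableSpace X]
    {μ : Measure X} {z : X} {s : ℝ}
    (hball : ∀ r, 0 < r → μ (Metric.closedBall z r) ≤ ENNReal.ofReal (r ^ s)) (t : ℝ) :
    μ {w | t < log (1 / dist z w)} ≤ ENNReal.ofReal (exp (-s * t)) :=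
  calc μ {w | t < log (1 / dist z w)} ≤ μ (Metric.closedBall z (exp (-t))) :=
        measure_mono <|
          (setOf_lt_log_one_div_dist_subset_ball z t).trans Metric.ball_subset_closedBall
    _ ≤ ENNReal.ofReal (exp (-t) ^ s) := hball _ (exp_pos _)
    _ = ENNReal.ofReal (exp (-s * t)) := by rw [← exp_mul, neg_mul_comm, mul_comm]

theorem stmt1_general (E : Set ℂ) (s : ℝ) (hs : 0 < s)
    (μ : Measure ℂ) (hsupp : μ Eᶜ = 0)
    (hgrowth : ∀ (z : ℂ) (r : ℝ), 0 < r → μ (Metric.closedBall z r) ≤ ENNReal.ofReal (r ^ s))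
    (hmass : μ E ≤ 1) (z : ℂ) :
    ∫ w, Real.log (1 / ‖z - w‖) ∂μ ≤
      ((μ E).toReal / s) * (1 + Real.log (1 / (μ E).toReal)) := by
  have hμuniv : μ univ = μ E := (measure_of_measure_compl_eq_zero hsupp).symm
  rcases eq_or_ne (μ E) 0 with h0 | h0
  · simp [Measure.measure_univ_eq_zero.1 (hμuniv.trans h0)]
  have hfin : μ E ≠ ⊤ := ne_top_of_le_ne_top ENNReal.one_ne_top hmass
  set M := (μ E).toReal
  have hμE : μ E = ENNReal.ofReal M := (ENNReal.ofReal_toReal hfin).symm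
  have hM0 : 0 < M := ENNReal.toReal_pos h0 hfin
  have hM1 : M ≤ 1 := ENNReal.toReal_le_of_le_ofReal zero_le_one (by simpa using hmass)
  set τ := log (1 / M) / s
  have hτ : 0 ≤ τ := div_nonneg (log_nonneg (one_le_one_div hM0 hM1)) hs.le
  have hexp : exp (-s * τ) = M := by
    rw [show -s * τ = log M by simp [τ, log_inv]; field_simp, exp_log hM0]
  have hlint := lintegral_ofReal_le_of_meas_lt_le_exp (f := fun w => log (1 / dist z w))
    (by fun_prop) hs hτ fun t _ => measure_lt_log_one_div_dist_le (hgrowth z) t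
  rw [hμuniv, hexp, hμE, ← ENNReal.ofReal_mul hM0.le, ← ENNReal.ofReal_add (by positivity)
    (by positivity)] at hlint
  simp_rw [← dist_eq_norm]
  calc ∫ w, log (1 / dist z w) ∂μ
        ≤ (∫⁻ w, ENNReal.ofReal (log (1 / dist z w)) ∂μ).toReal :=
          integral_le_toReal_lintegral_ofReal μ _
    _ ≤ M * τ + M / s := ENNReal.toReal_le_of_le_ofReal (by positivity) hlint
    _ = M / s * (1 + log (1 / M)) := by
      simp only [τ]
      ring

/-- Estimate of the logarithmic potential of a measure with power growth
`μ(B(z,r)) ≤ r^s` and total mass `μ(E) ≤ 1`: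
`U_μ(z) ≤ (μ(E)/s)·(1 + log(1/μ(E)))`. -/
theorem stmt1 (E : Set ℂ) (hE : IsCompact E) (s : ℝ) (hs : 0 < s)
    (μ : Measure ℂ) (hsupp : μ Eᶜ = 0)
    (hgrowth : ∀ (z : ℂ) (r : ℝ), 0 < r → μ (Metric.closedBall z r) ≤ ENNReal.ofReal (r ^ s))
    (hmass : μ E ≤ 1) (z : ℂ) :
    ∫ w, Real.log (1 / ‖z - w‖) ∂μ ≤
      ((μ E).toReal / s) * (1 + Real.log (1 / (μ E).toReal)) :=
  stmt1_general E s hs μ hsupp hgrowth hmass z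
end

section
/- Fix 0 < τ and let z, w ∈ ℂ with |w| = τ < |z|. Then Re( (z−w)·conj(z) / (|z−w|²·|z|) ) ≥ (1/|z|)·(1 − τ/|z|). In particular, this quantity is bounded below by (√(|z|−τ)·√(|z|+τ))/(|z−w|·|z|) ≥ √(|z|−τ)/(|z|·√(|z|+τ)). -/
/-!
By the law of cosines, `2 Re((z - w) conj z) = |z|² - τ² + |z - w|²`, so with `d = |z - w|` and
`s = √(|z|² - τ²)` the quantity equals `(s² + d²) / (2 d² |z|)`. AM-GM `s² + d² ≥ 2 s d` gives the
first bound, the triangle inequality `d ≤ |z| + τ` the second, and the third bound is below the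
second because `√(|z|² - τ²) ≤ |z|`.
-/

open ComplexConjugate

lemma Complex.two_mul_re_sub_mul_conj (z w : ℂ) :
    2 * ((z - w) * conj z).re = ‖z‖ ^ 2 - ‖w‖ ^ 2 + ‖z - w‖ ^ 2 := by
  simp only [Complex.sq_norm, Complex.normSq_apply, Complex.mul_re, Complex.sub_re,
    Complex.sub_im, Complex.conj_re, Complex.conj_im]
  ring

lemma Complex.re_sub_mul_conj_div_eq (z w : ℂ) :
    (((z - w) * conj z) / ((‖z - w‖ ^ 2 * ‖z‖ : ℝ) : ℂ)).re =
      (‖z‖ ^ 2 - ‖w‖ ^ 2 + ‖z - w‖ ^ 2) / (2 * (‖z - w‖ ^ 2 * ‖z‖)) := by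
  rw [Complex.div_ofReal_re, ← Complex.two_mul_re_sub_mul_conj, mul_div_mul_left _ _ two_ne_zero]

lemma div_mul_le_sq_add_sq_div {x d a : ℝ} (hd : 0 < d) (ha : 0 < a) :
    x / (d * a) ≤ (x ^ 2 + d ^ 2) / (2 * (d ^ 2 * a)) := by
  rw [div_le_div_iff₀ (by positivity) (by positivity)]
  nlinarith [mul_nonneg (mul_nonneg hd.le ha.le) (sq_nonneg (x - d))]

lemma sqrt_div_mul_sqrt_le {a τ d : ℝ} (ha : 0 < a) (hd : 0 < d) (hda : d ≤ a + τ) :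
    √(a - τ) / (a * √(a + τ)) ≤ √(a - τ) * √(a + τ) / (d * a) := by
  have hpos : 0 < a + τ := hd.trans_le hda
  have hq : 0 < √(a + τ) := Real.sqrt_pos.2 hpos
  calc √(a - τ) / (a * √(a + τ)) = √(a - τ) * √(a + τ) / ((a + τ) * a) := by
        field_simp
        rw [Real.sq_sqrt hpos.le]
    _ ≤ √(a - τ) * √(a + τ) / (d * a) := by gcongr

lemma one_div_mul_one_sub_div_le_sqrt {a τ : ℝ} (hτ : 0 ≤ τ) (hτa : τ ≤ a) (ha : 0 < a) :
    1 / a * (1 - τ / a) ≤ √(a - τ) / (a * √(a + τ)) := by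
  set p := √(a - τ)
  set q := √(a + τ)
  have hp : 0 ≤ p := Real.sqrt_nonneg _
  have hq : 0 < q := Real.sqrt_pos.2 (by linarith)
  have hp2 : p ^ 2 = a - τ := Real.sq_sqrt (by linarith)
  have hq2 : q ^ 2 = a + τ := Real.sq_sqrt (by linarith)
  have hpq : p * q ≤ a := by
    apply abs_le_of_sq_le_sq' _ ha.le |>.2
    nlinarith
  rw [show 1 / a * (1 - τ / a) = p ^ 2 / a ^ 2 by rw [hp2]; field_simp,
    div_le_div_iff₀ (by positivity) (by positivity)]
  nlinarith [mul_le_mul_of_nonneg_left hpq (mul_nonneg hp ha.le)]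

theorem stmt4_general (τ : ℝ) (z w : ℂ)
    (hw : ‖w‖ = τ) (hz : τ < ‖z‖) :
    (((z - w) * (starRingEnd ℂ) z) /
        ((‖z - w‖ ^ 2 * ‖z‖ : ℝ) : ℂ)).re ≥
      Real.sqrt (‖z‖ - τ) * Real.sqrt (‖z‖ + τ) /
        (‖z - w‖ * ‖z‖) ∧
    Real.sqrt (‖z‖ - τ) * Real.sqrt (‖z‖ + τ) /
        (‖z - w‖ * ‖z‖) ≥
      Real.sqrt (‖z‖ - τ) / (‖z‖ * Real.sqrt (‖z‖ + τ)) ∧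
    (((z - w) * (starRingEnd ℂ) z) /
        ((‖z - w‖ ^ 2 * ‖z‖ : ℝ) : ℂ)).re ≥
      (1 / ‖z‖) * (1 - τ / ‖z‖) := by
  have hτ : 0 ≤ τ := hw ▸ norm_nonneg w
  have ha : 0 < ‖z‖ := hτ.trans_lt hz
  have hd : 0 < ‖z - w‖ := norm_pos_iff.2 (sub_ne_zero.2 (by rintro rfl; exact hz.ne' hw))
  have hda : ‖z - w‖ ≤ ‖z‖ + τ := hw ▸ norm_sub_le z w
  have hs2 : (√(‖z‖ - τ) * √(‖z‖ + τ)) ^ 2 = ‖z‖ ^ 2 - ‖w‖ ^ 2 := by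
    rw [mul_pow, Real.sq_sqrt (by linarith), Real.sq_sqrt (by linarith), hw]
    ring
  have h₁ := div_mul_le_sq_add_sq_div (x := √(‖z‖ - τ) * √(‖z‖ + τ)) hd ha
  rw [hs2, ← Complex.re_sub_mul_conj_div_eq] at h₁
  have h₂ := sqrt_div_mul_sqrt_le ha hd hda
  exact ⟨h₁, h₂, (one_div_mul_one_sub_div_le_sqrt hτ hz.le ha).trans (h₂.trans h₁)⟩

/-- The elementary geometric estimate: for `|w| = τ < |z|`,
`Re((z−w)·conj z / (|z−w|²·|z|)) ≥ √(|z|−τ)√(|z|+τ)/(|z−w||z|) ≥ √(|z|−τ)/(|z|√(|z|+τ))`,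
and the quantity is bounded below by `(1/|z|)(1 − τ/|z|)`. -/
theorem stmt4 (τ : ℝ) (hτ : 0 < τ) (z w : ℂ)
    (hw : ‖w‖ = τ) (hz : τ < ‖z‖) :
    (((z - w) * (starRingEnd ℂ) z) /
        ((‖z - w‖ ^ 2 * ‖z‖ : ℝ) : ℂ)).re ≥
      Real.sqrt (‖z‖ - τ) * Real.sqrt (‖z‖ + τ) /
        (‖z - w‖ * ‖z‖) ∧
    Real.sqrt (‖z‖ - τ) * Real.sqrt (‖z‖ + τ) /
        (‖z - w‖ * ‖z‖) ≥
      Real.sqrt (‖z‖ - τ) / (‖z‖ * Real.sqrt (‖z‖ + τ)) ∧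
    (((z - w) * (starRingEnd ℂ) z) /
        ((‖z - w‖ ^ 2 * ‖z‖ : ℝ) : ℂ)).re ≥
      (1 / ‖z‖) * (1 - τ / ‖z‖) :=
  stmt4_general τ z w hw hz
end

section
/- Let B be the closed disc of center z₀ and radius τ, and let ω* be a positive finite Borel measure on B. Define u(z) = ∫_B log|z−w| dω*(w). Then for every z with |z−z₀| > τ, the radial derivative (with respect to r = |z−z₀|) satisfies ∂u/∂r(z) ≥ (√(|z−z₀|−τ)/√(|z−z₀|+τ)) · ω*(B)/|z−z₀| ≥ ω*(B)/|z−z₀| − τ·ω*(B)/|z−z₀|². In particular ∂u/∂r(z) ≥ 0. -/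
open MeasureTheory Metric
open scoped RealInnerProductSpace

/-!
Differentiating under the integral sign (on `ball z ((R - τ) / 2)`, with `R = ‖z - z₀‖`, the
gradient `(x - w) / ‖x - w‖²` of the kernel is bounded by `2 / (R - τ)`), the radial derivative
is the integral of `⟪z - w, z - z₀⟫ / (‖z - w‖² R)`. For `‖w - z₀‖ ≤ τ < R` this integrand is at
least `1 / (R + τ)`: expand `‖z - w‖²` and bound `⟪z - z₀, w - z₀⟫ ≥ -R τ` by Cauchy–Schwarz.
Both stated bounds then follow from `(R - τ) (R + τ) ≤ R²`.
-/

section InnerProductSpace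

variable {E : Type*} [NormedAddCommGroup E] [InnerProductSpace ℝ E]

theorem hasFDerivAt_log_norm_sub {w x : E} (hx : x ≠ w) :
    HasFDerivAt (fun y => Real.log ‖y - w‖) ((‖x - w‖ ^ 2)⁻¹ • innerSL ℝ (x - w)) x := by
  have hsq : ‖x - w‖ ^ 2 ≠ 0 := by simpa [sub_eq_zero] using hx
  have hlog : (fun y => Real.log ‖y - w‖) = fun y => 1 / 2 * Real.log (‖y - w‖ ^ 2) := by
    funext y
    rw [Real.log_pow]
    ring
  rw [hlog]
  refine (((hasFDerivAt_id x).sub_const w).norm_sq.log hsq).const_mul (1 / 2 : ℝ)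
    |>.congr_fderiv ?_
  ext v
  simp only [one_div, id_eq, map_sub, ContinuousLinearMap.comp_id, smul_apply, sub_apply,
    coe_innerSL_apply, nsmul_eq_mul, Nat.cast_ofNat, smul_eq_mul]
  ring

theorem norm_smul_innerSL_le (v : E) : ‖(‖v‖ ^ 2)⁻¹ • innerSL ℝ v‖ ≤ ‖v‖⁻¹ := by
  rw [norm_smul, innerSL_apply_norm, norm_inv, norm_pow, norm_norm]
  rcases eq_or_ne ‖v‖ 0 with h | h
  · simp [h]
  · rw [sq, mul_inv, mul_assoc, inv_mul_cancel₀ h, mul_one]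

/-- With `a = z - z₀` and `b = w - z₀`, the right side is the radial component at `z` of the
gradient of `log ‖· - w‖`. -/
theorem one_div_add_le_inner_div_norm_sub_sq {a b : E} {τ : ℝ} (hb : ‖b‖ ≤ τ) (ha : τ < ‖a‖) :
    1 / (‖a‖ + τ) ≤ (‖a - b‖ ^ 2)⁻¹ * ⟪a - b, ‖a‖⁻¹ • a⟫ := by
  have hb0 : 0 ≤ ‖b‖ := norm_nonneg b
  have hR : 0 < ‖a‖ := by linarith
  have hab : 0 < ‖a - b‖ := by linarith [norm_sub_norm_le a b]
  have hinner : -(‖a‖ * ‖b‖) ≤ ⟪a, b⟫ := (abs_le.1 (abs_real_inner_le_norm a b)).1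
  have hrhs : (‖a - b‖ ^ 2)⁻¹ * ⟪a - b, ‖a‖⁻¹ • a⟫
      = (‖a‖ ^ 2 - ⟪a, b⟫) / (‖a‖ * ‖a - b‖ ^ 2) := by
    rw [inner_smul_right, inner_sub_left, real_inner_self_eq_norm_sq, real_inner_comm]
    field_simp
  rw [hrhs, div_le_div_iff₀ (by linarith) (by positivity), norm_sub_sq_real]
  nlinarith [mul_le_mul_of_nonneg_left hb hb0,
    mul_le_mul_of_nonneg_left hinner (sub_nonneg.2 ha.le)]

end InnerProductSpace

section LogPotential

variable {E : Type*} [NormedAddCommGroup E] [MeasurableSpace E] [BorelSpace E]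

noncomputable def logPotential (μ : Measure E) (x : E) : ℝ := ∫ y, Real.log ‖x - y‖ ∂μ

variable {μ : Measure E}

theorem aestronglyMeasurable_log_norm_sub (x : E) :
    AEStronglyMeasurable (fun y => Real.log ‖x - y‖) μ :=
  (Real.measurable_log.comp
    (continuous_const.sub continuous_id).norm.measurable).aestronglyMeasurable

theorem integrable_log_norm_sub_of_ae_mem_closedBall [IsFiniteMeasure μ] {x z₀ : E} {τ : ℝ}
    (hμ : ∀ᵐ y ∂μ, y ∈ closedBall z₀ τ) (hx : τ < ‖x - z₀‖) :
    Integrable (fun y => Real.log ‖x - y‖) μ := by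
  refine (integrable_const (max |Real.log (‖x - z₀‖ - τ)| |Real.log (‖x - z₀‖ + τ)|)).mono'
    (aestronglyMeasurable_log_norm_sub x) ?_
  filter_upwards [hμ] with y hy
  rw [mem_closedBall, dist_eq_norm] at hy
  have hlow : ‖x - z₀‖ - τ ≤ ‖x - y‖ := by
    linarith [norm_sub_le_norm_sub_add_norm_sub x y z₀]
  have hup : ‖x - y‖ ≤ ‖x - z₀‖ + τ := by
    linarith [norm_sub_le_norm_sub_add_norm_sub x z₀ y, norm_sub_rev z₀ y]
  have hpos : 0 < ‖x - z₀‖ - τ := sub_pos.2 hx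
  rw [Real.norm_eq_abs]
  exact abs_le_max_abs_abs (Real.log_le_log hpos hlow) (Real.log_le_log (hpos.trans_le hlow) hup)

variable [InnerProductSpace ℝ E] [SecondCountableTopology E]

theorem aestronglyMeasurable_fderiv_log_norm_sub (x : E) :
    AEStronglyMeasurable (fun y => (‖x - y‖ ^ 2)⁻¹ • innerSL ℝ (x - y)) μ :=
  ((continuous_const.sub continuous_id).norm.pow 2).measurable.inv.aestronglyMeasurable.smul
    ((innerSL ℝ).continuous.comp_aestronglyMeasurable
      (continuous_const.sub continuous_id).aestronglyMeasurable)

theorem integrable_fderiv_log_norm_sub [IsFiniteMeasure μ] {z : E} {d : ℝ} (hd : 0 < d)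
    (hsep : ∀ᵐ y ∂μ, d ≤ ‖z - y‖) :
    Integrable (fun y => (‖z - y‖ ^ 2)⁻¹ • innerSL ℝ (z - y)) μ := by
  refine (integrable_const d⁻¹).mono' (aestronglyMeasurable_fderiv_log_norm_sub z) ?_
  filter_upwards [hsep] with y hy
  exact (norm_smul_innerSL_le _).trans (inv_anti₀ hd hy)

theorem hasFDerivAt_logPotential [IsFiniteMeasure μ] {z : E} {d : ℝ}
    (hd : 0 < d) (hsep : ∀ᵐ y ∂μ, d ≤ ‖z - y‖) (hint : Integrable (fun y => Real.log ‖z - y‖) μ) :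
    HasFDerivAt (logPotential μ) (∫ y, (‖z - y‖ ^ 2)⁻¹ • innerSL ℝ (z - y) ∂μ) z := by
  have hball : ∀ᵐ y ∂μ, ∀ x ∈ ball z (d / 2), d / 2 ≤ ‖x - y‖ := by
    filter_upwards [hsep] with y hy x hx
    rw [mem_ball, dist_eq_norm] at hx
    linarith [norm_sub_le_norm_sub_add_norm_sub z x y, norm_sub_rev z x]
  refine hasFDerivAt_integral_of_dominated_of_fderiv_le
    (F' := fun x y => (‖x - y‖ ^ 2)⁻¹ • innerSL ℝ (x - y)) (bound := fun _ => (d / 2)⁻¹)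
    (ball_mem_nhds z (half_pos hd)) (Filter.Eventually.of_forall aestronglyMeasurable_log_norm_sub)
    hint (aestronglyMeasurable_fderiv_log_norm_sub z) ?_ (integrable_const _) ?_
  · filter_upwards [hball] with y hy x hx
    exact (norm_smul_innerSL_le _).trans (inv_anti₀ (half_pos hd) (hy x hx))
  · filter_upwards [hball] with y hy x hx
    refine hasFDerivAt_log_norm_sub fun hxy => ?_
    have := hy x hx
    rw [hxy, sub_self, norm_zero] at this
    linarith

theorem measureReal_univ_div_le_fderiv_logPotential [IsFiniteMeasure μ] {z z₀ : E} {τ : ℝ}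
    (hμ : ∀ᵐ y ∂μ, y ∈ closedBall z₀ τ) (hz : τ < ‖z - z₀‖) :
    μ.real Set.univ / (‖z - z₀‖ + τ) ≤
      fderiv ℝ (logPotential μ) z (‖z - z₀‖⁻¹ • (z - z₀)) := by
  have hsep : ∀ᵐ y ∂μ, ‖z - z₀‖ - τ ≤ ‖z - y‖ := by
    filter_upwards [hμ] with y hy
    rw [mem_closedBall, dist_eq_norm] at hy
    linarith [norm_sub_le_norm_sub_add_norm_sub z y z₀]
  have hd : 0 < ‖z - z₀‖ - τ := sub_pos.2 hz
  rw [(hasFDerivAt_logPotential hd hsep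
      (integrable_log_norm_sub_of_ae_mem_closedBall hμ hz)).fderiv,
    ContinuousLinearMap.integral_apply (integrable_fderiv_log_norm_sub hd hsep)]
  have hle : ∀ᵐ y ∂μ, 1 / (‖z - z₀‖ + τ) ≤
      ((‖z - y‖ ^ 2)⁻¹ • innerSL ℝ (z - y)) (‖z - z₀‖⁻¹ • (z - z₀)) := by
    filter_upwards [hμ] with y hy
    rw [mem_closedBall, dist_eq_norm] at hy
    simpa only [sub_sub_sub_cancel_right, smul_apply, coe_innerSL_apply, smul_eq_mul] using
      one_div_add_le_inner_div_norm_sub_sq (a := z - z₀) hy hz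
  have := integral_mono_ae (integrable_const _)
    ((integrable_fderiv_log_norm_sub hd hsep).apply_continuousLinearMap _) hle
  rwa [integral_const, smul_eq_mul, mul_one_div] at this

end LogPotential

theorem Real.sqrt_sub_div_sqrt_add_le {R τ : ℝ} (hτ : 0 ≤ τ) (hR : τ < R) :
    √(R - τ) / √(R + τ) ≤ R / (R + τ) := by
  have hR0 : 0 < R := hτ.trans_lt hR
  have hpos : 0 < R + τ := by linarith
  rw [← Real.sqrt_div (by linarith), Real.sqrt_le_left (by positivity), div_pow,
    div_le_div_iff₀ hpos (by positivity)]
  nlinarith [mul_nonneg (mul_nonneg hτ hτ) hpos.le]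

theorem Real.sub_div_le_sqrt_sub_div_sqrt_add {R τ : ℝ} (hτ : 0 ≤ τ) (hR : τ < R) :
    (R - τ) / R ≤ √(R - τ) / √(R + τ) := by
  have hR0 : 0 < R := hτ.trans_lt hR
  have hRτ : 0 < R - τ := by linarith
  rw [← Real.sqrt_div hRτ.le, Real.le_sqrt (by positivity) (by positivity), div_pow,
    div_le_div_iff₀ (by positivity) (by linarith)]
  nlinarith [mul_nonneg (mul_nonneg hτ hτ) hRτ.le]

/-- Lower bound for the radial derivative of the logarithmic potential
`u(z) = ∫_B log|z−w| dω*(w)` of a measure on the closed disc `B = B(z₀,τ)`: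
for `|z−z₀| > τ`,
`∂u/∂r(z) ≥ (√(|z−z₀|−τ)/√(|z−z₀|+τ))·ω*(B)/|z−z₀| ≥ ω*(B)/|z−z₀| − τ·ω*(B)/|z−z₀|²`,
and in particular `∂u/∂r(z) ≥ 0`. -/
theorem stmt5 (z₀ : ℂ) (τ : ℝ) (hτ : 0 < τ) (ω : Measure ℂ) [IsFiniteMeasure ω]
    (hsupp : ω (Metric.closedBall z₀ τ)ᶜ = 0)
    (u : ℂ → ℝ) (hu : ∀ z, u z = ∫ w, Real.log (‖z - w‖) ∂ω)
    (z : ℂ) (hz : τ < ‖z - z₀‖) :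
    Real.sqrt (‖z - z₀‖ - τ) / Real.sqrt (‖z - z₀‖ + τ) *
        ((ω (Metric.closedBall z₀ τ)).toReal / ‖z - z₀‖) ≤
      fderiv ℝ u z ((z - z₀) / (‖z - z₀‖ : ℂ)) ∧
    (ω (Metric.closedBall z₀ τ)).toReal / ‖z - z₀‖ -
        τ * (ω (Metric.closedBall z₀ τ)).toReal / ‖z - z₀‖ ^ 2 ≤
      Real.sqrt (‖z - z₀‖ - τ) / Real.sqrt (‖z - z₀‖ + τ) *
        ((ω (Metric.closedBall z₀ τ)).toReal / ‖z - z₀‖) ∧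
    0 ≤ fderiv ℝ u z ((z - z₀) / (‖z - z₀‖ : ℂ)) := by
  have hpotential : u = logPotential ω := funext hu
  have hmass : (ω (closedBall z₀ τ)).toReal = ω.real Set.univ := by
    rw [← measureReal_def, measureReal_congr (ae_eq_univ.2 hsupp)]
  have hdir : (z - z₀) / (‖z - z₀‖ : ℂ) = ‖z - z₀‖⁻¹ • (z - z₀) := by
    rw [Complex.real_smul, div_eq_inv_mul, Complex.ofReal_inv]
  have hbound := measureReal_univ_div_le_fderiv_logPotential (mem_ae_iff.2 hsupp) hz
  rw [hpotential, hmass, hdir]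
  set R := ‖z - z₀‖
  have hR : 0 < R := hτ.trans hz
  have hM : 0 ≤ ω.real Set.univ := measureReal_nonneg
  have hsqrt : √(R - τ) / √(R + τ) * (ω.real Set.univ / R) ≤ ω.real Set.univ / (R + τ) :=
    calc √(R - τ) / √(R + τ) * (ω.real Set.univ / R)
        ≤ R / (R + τ) * (ω.real Set.univ / R) := by
          gcongr ?_ * _
          exact Real.sqrt_sub_div_sqrt_add_le hτ.le hz
      _ = ω.real Set.univ / (R + τ) := by field_simp
  refine ⟨hsqrt.trans hbound, ?_, (by positivity : (0 : ℝ) ≤ _).trans (hsqrt.trans hbound)⟩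
  calc ω.real Set.univ / R - τ * ω.real Set.univ / R ^ 2
      = (R - τ) / R * (ω.real Set.univ / R) := by field_simp
    _ ≤ _ := by
        gcongr ?_ * _
        exact Real.sub_div_le_sqrt_sub_div_sqrt_add hτ.le hz
end

section
/- Let g be a nonnegative harmonic function on the open annulus A = {z : ρ < |z| < 2ρ} ⊂ ℂ, continuous on its closure, vanishing on the inner circle {|z| = ρ}. Suppose there is a constant m ≥ 1 such that g(z) ≤ m·g(z') for all z, z' with |z| = |z'| = 2ρ. Then g(z) ≤ m·g(z') for all z, z' in the closed annulus with |z| = |z'|. -/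
open MeasureTheory

/-!
If `‖z‖ = ‖z'‖`, a reflection `L` of the plane through a line containing `0` maps `z'` to `z` and
preserves the annulus. As the Laplacian is invariant under linear isometries, `m • g - g ∘ L` is
harmonic on the annulus, and it is nonnegative on both boundary circles, so by the weak minimum
principle it is nonnegative throughout; at `z'` this is the claim.

The weak minimum principle is the classical perturbation argument: for superharmonic `h` the
function `ε ‖x‖² - h` is strictly subharmonic, and a strictly subharmonic function has no interior
maximum, because the Hessian at a maximum is negative semidefinite.
-/

noncomputable def laplacian (f : ℂ → ℝ) (z : ℂ) : ℝ :=
  fderiv ℝ (fun w => fderiv ℝ f w 1) z 1 +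
    fderiv ℝ (fun w => fderiv ℝ f w Complex.I) z Complex.I

def HarmonicOnSet (f : ℂ → ℝ) (s : Set ℂ) : Prop :=
  ContDiffOn ℝ 2 f s ∧ ∀ z ∈ s, laplacian f z = 0

open Filter Topology Metric Set
open scoped Laplacian

theorem IsLocalMax.deriv_deriv_nonpos {ψ : ℝ → ℝ} {t : ℝ} (h : IsLocalMax ψ t)
    (hψ : ContinuousAt ψ t) : deriv (deriv ψ) t ≤ 0 := by
  by_contra! hpos
  have hmin : IsLocalMin ψ t := isLocalMin_of_deriv_deriv_pos hpos h.deriv_eq_zero hψ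
  have hconst : ψ =ᶠ[𝓝 t] fun _ ↦ ψ t := by
    filter_upwards [h, hmin] with s hs hs' using le_antisymm hs hs'
  exact hpos.ne' (by simp [hconst.deriv.deriv_eq])

section NormedSpace

variable {E : Type*} [NormedAddCommGroup E] [NormedSpace ℝ E]

theorem ContDiffAt.deriv_deriv_comp_add_smul {f : E → ℝ} {x : E} (hf : ContDiffAt ℝ 2 f x)
    (v : E) : deriv (deriv fun t : ℝ ↦ f (x + t • v)) 0 = iteratedFDeriv ℝ 2 f x ![v, v] := by
  have hline : ∀ t : ℝ, HasDerivAt (fun t : ℝ ↦ x + t • v) v t := fun t ↦ by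
    simpa using ((hasDerivAt_id t).smul_const v).const_add x
  have hdiff : ∀ᶠ y in 𝓝 x, DifferentiableAt ℝ f y :=
    (hf.eventually (by simp)).mono fun y hy ↦ hy.differentiableAt (by norm_num)
  have hderiv : deriv (fun t : ℝ ↦ f (x + t • v)) =ᶠ[𝓝 0] fun t ↦ fderiv ℝ f (x + t • v) v := by
    have : Tendsto (fun t : ℝ ↦ x + t • v) (𝓝 0) (𝓝 x) := by
      simpa using (hline 0).continuousAt.tendsto
    filter_upwards [this.eventually hdiff] with t ht
    exact (ht.hasFDerivAt.comp_hasDerivAt t (hline t)).deriv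
  have hf' : DifferentiableAt ℝ (fderiv ℝ f) x :=
    (hf.fderiv_right (m := 1) (by norm_num)).differentiableAt (by norm_num)
  have hderiv' := (hf'.hasFDerivAt.clm_apply (hasFDerivAt_const v x)).comp_hasDerivAt_of_eq 0
    (hline 0) (by simp)
  simp only [ContinuousLinearMap.comp_zero, zero_add, ContinuousLinearMap.flip_apply] at hderiv'
  rw [hderiv.deriv_eq, iteratedFDeriv_two_apply]
  exact hderiv'.deriv

theorem IsLocalMax.iteratedFDeriv_two_nonpos {f : E → ℝ} {x : E} (h : IsLocalMax f x)
    (hf : ContDiffAt ℝ 2 f x) (v : E) : iteratedFDeriv ℝ 2 f x ![v, v] ≤ 0 := by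
  rw [← hf.deriv_deriv_comp_add_smul v]
  have hline : Continuous fun t : ℝ ↦ x + t • v := by fun_prop
  have hmax : IsLocalMax f (x + (0 : ℝ) • v) := by simpa using h
  have hcont : ContinuousAt f (x + (0 : ℝ) • v) := by simpa using hf.continuousAt
  exact (hmax.comp_continuous (g := fun t : ℝ ↦ x + t • v) hline.continuousAt).deriv_deriv_nonpos
    (ContinuousAt.comp (g := f) hcont hline.continuousAt)

end NormedSpace

section InnerProductSpace

variable {E : Type*} [NormedAddCommGroup E] [InnerProductSpace ℝ E] [FiniteDimensional ℝ E]

theorem IsLocalMax.laplacian_nonpos {f : E → ℝ} {x : E} (h : IsLocalMax f x)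
    (hf : ContDiffAt ℝ 2 f x) : Δ f x ≤ 0 := by
  rw [InnerProductSpace.laplacian_eq_iteratedFDeriv_stdOrthonormalBasis]
  exact Finset.sum_nonpos fun i _ ↦ h.iteratedFDeriv_two_nonpos hf _

theorem laplacian_norm_sq (x : E) : Δ (fun y : E ↦ ‖y‖ ^ 2) x = 2 * Module.finrank ℝ E := by
  have hderiv : fderiv ℝ (fun y : E ↦ ‖y‖ ^ 2) = ⇑(2 • innerSL ℝ (E := E)) := by
    rw [fderiv_norm_sq]; ext; simp
  rw [InnerProductSpace.laplacian_eq_iteratedFDeriv_stdOrthonormalBasis]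
  simp only [iteratedFDeriv_two_apply, hderiv]
  rw [ContinuousLinearMap.fderiv]
  simp [innerSL_apply_apply ℝ, mul_comm]

theorem laplacian_comp_linearIsometryEquiv {F : Type*} [NormedAddCommGroup F] [NormedSpace ℝ F]
    (f : E → F) (L : E ≃ₗᵢ[ℝ] E) (x : E) : Δ (f ∘ L) x = Δ f (L x) := by
  let b := stdOrthonormalBasis ℝ E
  have hcomp := L.toContinuousLinearEquiv.iteratedFDerivWithin_comp_right f uniqueDiffOn_univ
    (mem_univ (L x)) 2
  rw [preimage_univ, iteratedFDerivWithin_univ, iteratedFDerivWithin_univ] at hcomp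
  rw [InnerProductSpace.laplacian_eq_iteratedFDeriv_orthonormalBasis _ b,
    InnerProductSpace.laplacian_eq_iteratedFDeriv_orthonormalBasis _ (b.map L)]
  refine Finset.sum_congr rfl fun i _ ↦ ?_
  erw [hcomp, ContinuousMultilinearMap.compContinuousLinearMap_apply]
  congr 1
  ext j
  fin_cases j <;> rfl

theorem InnerProductSpace.HarmonicAt.comp_linearIsometryEquiv {F : Type*} [NormedAddCommGroup F]
    [NormedSpace ℝ F] {f : E → F} (L : E ≃ₗᵢ[ℝ] E) {x : E} (h : HarmonicAt f (L x)) :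
    HarmonicAt (f ∘ L) x := by
  refine ⟨h.1.comp x L.contDiff.contDiffAt, ?_⟩
  have hΔ : Δ (f ∘ L) = Δ f ∘ L := funext (laplacian_comp_linearIsometryEquiv f L)
  rw [hΔ]
  exact L.continuous.continuousAt.tendsto.eventually h.2

theorem IsCompact.exists_isMaxOn_mem_diff_of_laplacian_pos {K U : Set E} (hK : IsCompact K)
    (hKne : K.Nonempty) (hU : IsOpen U) (hUK : U ⊆ K) {u : E → ℝ} (hcont : ContinuousOn u K)
    (hu : ContDiffOn ℝ 2 u U) (hΔ : ∀ x ∈ U, 0 < Δ u x) : ∃ w ∈ K \ U, IsMaxOn u K w := by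
  obtain ⟨w, hwK, hmax⟩ := hK.exists_isMaxOn hKne hcont
  refine ⟨w, ⟨hwK, fun hwU ↦ ?_⟩, hmax⟩
  have hloc : IsLocalMax u w := hmax.isLocalMax (mem_of_superset (hU.mem_nhds hwU) hUK)
  exact (hloc.laplacian_nonpos (hu.contDiffAt (hU.mem_nhds hwU))).not_gt (hΔ w hwU)

theorem IsCompact.nonneg_of_laplacian_nonpos [Nontrivial E] {K U : Set E} (hK : IsCompact K)
    (hU : IsOpen U) (hUK : U ⊆ K) {h : E → ℝ} (hcont : ContinuousOn h K)
    (hh : ContDiffOn ℝ 2 h U) (hΔ : ∀ x ∈ U, Δ h x ≤ 0) (hbdry : ∀ x ∈ K \ U, 0 ≤ h x) :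
    ∀ x ∈ K, 0 ≤ h x := by
  intro x hx
  by_contra! hneg
  obtain ⟨R, hR⟩ := hK.isBounded.exists_norm_le
  set ε := -h x / (R ^ 2 + 1)
  have hε : 0 < ε := div_pos (neg_pos.mpr hneg) (by positivity)
  have hεR : ε * (R ^ 2 + 1) = -h x := div_mul_cancel₀ _ (by positivity)
  have hsq : ContDiff ℝ 2 fun y : E ↦ ‖y‖ ^ 2 := contDiff_norm_sq ℝ
  -- Tilting `-h` by `ε ‖y‖²` makes it strictly subharmonic, and `ε` is chosen so small that on
  -- `K` the tilt stays below `-h x`.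
  have hΔu : ∀ y ∈ U, 0 < Δ (ε • (fun y : E ↦ ‖y‖ ^ 2) - h : E → ℝ) y := by
    intro y hy
    have hhy := hh.contDiffAt (hU.mem_nhds hy)
    have hεsq : ContDiffAt ℝ 2 (ε • fun y : E ↦ ‖y‖ ^ 2) y := hsq.contDiffAt.const_smul ε
    rw [hεsq.laplacian_sub hhy,
      InnerProductSpace.laplacian_smul _ hsq.contDiffAt, laplacian_norm_sq]
    have hdim : (0 : ℝ) < Module.finrank ℝ E := by exact_mod_cast Module.finrank_pos
    have hΔy := hΔ y hy
    simp only [smul_eq_mul]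
    nlinarith
  obtain ⟨w, ⟨hwK, hwU⟩, hmax⟩ := hK.exists_isMaxOn_mem_diff_of_laplacian_pos ⟨x, hx⟩ hU hUK
    ((hsq.continuous.continuousOn.const_smul ε).sub hcont) ((hsq.contDiffOn.const_smul ε).sub hh)
    hΔu
  have hxw : ε * ‖x‖ ^ 2 - h x ≤ ε * ‖w‖ ^ 2 - h w := by simpa using hmax hx
  have hw : ‖w‖ ^ 2 ≤ R ^ 2 := pow_le_pow_left₀ (norm_nonneg w) (hR w hwK) 2
  nlinarith [hbdry w ⟨hwK, hwU⟩, sq_nonneg ‖x‖]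

end InnerProductSpace

theorem norm_eq_or_norm_eq_of_mem_annulus_diff {E : Type*} [SeminormedAddCommGroup E] {x : E}
    {r R : ℝ} (hx : x ∈ (closedBall 0 R \ ball 0 r) \ (ball 0 R \ closedBall 0 r)) :
    ‖x‖ = r ∨ ‖x‖ = R := by
  simp only [Set.mem_sdiff, mem_closedBall, mem_ball, dist_zero_right, not_and, not_lt,
    not_le] at hx
  by_contra! hne
  exact hne.1 (le_antisymm (hx.2 (lt_of_le_of_ne hx.1.1 hne.2)) hx.1.2)

theorem ContDiffAt.laplacian_eq_innerProductSpace_laplacian {f : ℂ → ℝ} {z : ℂ}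
    (hf : ContDiffAt ℝ 2 f z) : laplacian f z = Δ f z := by
  have hf' : DifferentiableAt ℝ (fderiv ℝ f) z :=
    (hf.fderiv_right (m := 1) (by norm_num)).differentiableAt (by norm_num)
  have hsecond (v : ℂ) :
      fderiv ℝ (fun w ↦ fderiv ℝ f w v) z v = fderiv ℝ (fderiv ℝ f) z v v := by
    simp [fderiv_clm_apply hf' (differentiableAt_const v)]
  rw [laplacian, hsecond, hsecond, InnerProductSpace.laplacian_eq_iteratedFDeriv_complexPlane]
  simp [iteratedFDeriv_two_apply]

theorem HarmonicOnSet.harmonicOnNhd {f : ℂ → ℝ} {s : Set ℂ} (hf : HarmonicOnSet f s)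
    (hs : IsOpen s) : InnerProductSpace.HarmonicOnNhd f s := by
  have hC2 : ∀ w ∈ s, ContDiffAt ℝ 2 f w := fun w hw ↦ hf.1.contDiffAt (hs.mem_nhds hw)
  refine fun z hz ↦ ⟨hC2 z hz, ?_⟩
  filter_upwards [hs.mem_nhds hz] with w hw
  rw [← (hC2 w hw).laplacian_eq_innerProductSpace_laplacian, hf.2 w hw, Pi.zero_apply]

theorem stmt7_general (ρ : ℝ) (m : ℝ) (g : ℂ → ℝ)
    (hcont : ContinuousOn g (Metric.closedBall 0 (2 * ρ) \ Metric.ball 0 ρ))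
    (hharm : HarmonicOnSet g (Metric.ball 0 (2 * ρ) \ Metric.closedBall 0 ρ))
    (hinner : ∀ z : ℂ, ‖z‖ = ρ → g z = 0)
    (houter : ∀ z z' : ℂ, ‖z‖ = 2 * ρ → ‖z'‖ = 2 * ρ → g z ≤ m * g z') :
    ∀ z z' : ℂ, ρ ≤ ‖z‖ → ‖z‖ ≤ 2 * ρ →
      ‖z'‖ = ‖z‖ → g z ≤ m * g z' := by
  intro z z' hρz hz2ρ hz'
  set K := closedBall (0 : ℂ) (2 * ρ) \ ball 0 ρ
  set U := ball (0 : ℂ) (2 * ρ) \ closedBall 0 ρ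
  have hU : IsOpen U := isOpen_ball.sdiff isClosed_closedBall
  set L : ℂ ≃ₗᵢ[ℝ] ℂ := (ℝ ∙ (z' - z))ᗮ.reflection
  have hLz' : L z' = z := Submodule.reflection_sub hz'
  have hLK : MapsTo L K K := fun w hw ↦ by simpa [K, L.norm_map] using hw
  have hLU : MapsTo L U U := fun w hw ↦ by simpa [U, L.norm_map] using hw
  have hharm' := hharm.harmonicOnNhd hU
  have hcomp : InnerProductSpace.HarmonicOnNhd (m • g - g ∘ L) U := fun w hw ↦
    (hharm' w hw).const_smul.sub ((hharm' (L w) (hLU hw)).comp_linearIsometryEquiv L)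
  have hbdry : ∀ w ∈ K \ U, 0 ≤ (m • g - g ∘ L) w := by
    intro w hw
    have hLw : ‖L w‖ = ‖w‖ := L.norm_map w
    rcases norm_eq_or_norm_eq_of_mem_annulus_diff hw with hw | hw
    · simp [hinner w hw, hinner (L w) (hLw ▸ hw)]
    · simpa using houter (L w) w (hLw ▸ hw) hw
  have hK := ((isCompact_closedBall 0 _).diff isOpen_ball).nonneg_of_laplacian_nonpos hU
    (sdiff_subset_sdiff ball_subset_closedBall ball_subset_closedBall)
    ((hcont.const_smul m).sub (hcont.comp L.continuous.continuousOn hLK)) hcomp.contDiffOn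
    (fun w hw ↦ (hcomp w hw).2.self_of_nhds.le) hbdry
  have hz'K : z' ∈ K := by simp [K, hz', hρz, hz2ρ]
  simpa [hLz'] using hK z' hz'K

/-- Harnack-type comparison on an annulus: a nonnegative harmonic function on
`{ρ < |z| < 2ρ}`, continuous up to the boundary and vanishing on the inner circle, which is
`m`-comparable on the outer circle, is `m`-comparable on every intermediate circle. -/
theorem stmt7 (ρ : ℝ) (hρ : 0 < ρ) (m : ℝ) (hm : 1 ≤ m) (g : ℂ → ℝ)
    (hcont : ContinuousOn g (Metric.closedBall 0 (2 * ρ) \ Metric.ball 0 ρ))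
    (hharm : HarmonicOnSet g (Metric.ball 0 (2 * ρ) \ Metric.closedBall 0 ρ))
    (hnonneg : ∀ z ∈ Metric.closedBall (0 : ℂ) (2 * ρ) \ Metric.ball 0 ρ, 0 ≤ g z)
    (hinner : ∀ z : ℂ, ‖z‖ = ρ → g z = 0)
    (houter : ∀ z z' : ℂ, ‖z‖ = 2 * ρ → ‖z'‖ = 2 * ρ → g z ≤ m * g z') :
    ∀ z z' : ℂ, ρ ≤ ‖z‖ → ‖z‖ ≤ 2 * ρ →
      ‖z'‖ = ‖z‖ → g z ≤ m * g z' :=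
  stmt7_general ρ m g hcont hharm hinner houter
end

section
/- Let g be a C¹ function on an annulus {α ≤ |z| ≤ μα} (centered at 0) whose tangential derivative satisfies |∂g/∂s(z)| ≤ 10·∂g/∂r(z) with ∂g/∂r(z) > 0 throughout the annulus. Let r(θ)e^{iθ}, θ ∈ [0, θ₂], be a C¹ parametrization of a level curve {g = c} inside the annulus with r(0) = α. Then r(θ₂) ≤ e^{20π}·α. In particular, if μ > e^{20π} the level curve component cannot reach the outer circle |z| = μα within one full turn. -/
/-!
Along the level curve, `g(r(θ)e^{iθ})` is constant, so its derivative
`r'(θ) ∂g/∂r + r(θ) ∂g/∂s` vanishes. Since `∂g/∂r > 0` and `|∂g/∂s| ≤ 10 ∂g/∂r`, this forces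
`r' ≤ 10 r`, and Grönwall's inequality gives `r(θ₂) ≤ e^{10 θ₂} r(0) ≤ e^{20π} α`.
-/

open Complex Filter Set Topology

theorem hasDerivAt_ofReal_mul_exp_mul_I {r : ℝ → ℝ} {r' θ : ℝ} (hr : HasDerivAt r r' θ) :
    HasDerivAt (fun t : ℝ => (r t : ℂ) * exp (t * I))
      ((r' : ℂ) * exp (θ * I) + (r θ : ℂ) * (I * exp (θ * I))) θ := by
  have hangle : HasDerivAt (fun t : ℝ => (t : ℂ) * I) I θ := by
    simpa using (hasDerivAt_id (θ : ℂ)).comp_ofReal.mul_const I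
  rw [mul_comm I]
  exact hr.ofReal_comp.mul hangle.cexp

theorem norm_ofReal_mul_exp_mul_I {ρ : ℝ} (hρ : 0 ≤ ρ) (θ : ℝ) :
    ‖(ρ : ℂ) * exp (θ * I)‖ = ρ := by
  rw [norm_mul, norm_exp_ofReal_mul_I, norm_real, Real.norm_of_nonneg hρ, mul_one]

theorem ofReal_mul_exp_mul_I_div_norm {ρ : ℝ} (hρ : 0 < ρ) (θ : ℝ) :
    (ρ : ℂ) * exp (θ * I) / (‖(ρ : ℂ) * exp (θ * I)‖ : ℂ) = exp (θ * I) := by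
  rw [norm_ofReal_mul_exp_mul_I hρ.le, mul_div_cancel_left₀ _ (ofReal_ne_zero.mpr hρ.ne')]

theorem fderiv_apply_eq_zero_of_eventuallyEq_const {E F : Type*}
    [NormedAddCommGroup E] [NormedSpace ℝ E] [NormedAddCommGroup F] [NormedSpace ℝ F]
    {g : E → F} {γ : ℝ → E} {v : E} {t : ℝ} {c : F}
    (hg : DifferentiableAt ℝ g (γ t)) (hγ : HasDerivAt γ v t)
    (hconst : (g ∘ γ) =ᶠ[𝓝 t] fun _ => c) :
    fderiv ℝ g (γ t) v = 0 :=
  (hg.hasFDerivAt.comp_hasDerivAt t hγ).unique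
    ((hasDerivAt_const t c).congr_of_eventuallyEq hconst)

theorem deriv_le_of_polar_level_curve {g : ℂ → ℝ} {r : ℝ → ℝ} {r' θ c K : ℝ}
    (hr : HasDerivAt r r' θ) (hpos : 0 < r θ)
    (hg : DifferentiableAt ℝ g ((r θ : ℂ) * exp (θ * I)))
    (hderiv : let z := (r θ : ℂ) * exp (θ * I)
      0 < fderiv ℝ g z (z / (‖z‖ : ℂ)) ∧
        |fderiv ℝ g z (I * z / (‖z‖ : ℂ))| ≤ K * fderiv ℝ g z (z / (‖z‖ : ℂ)))
    (hlev : (fun t : ℝ => g ((r t : ℂ) * exp (t * I))) =ᶠ[𝓝 θ] fun _ => c) :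
    r' ≤ K * r θ := by
  obtain ⟨hrad, htan⟩ := hderiv
  rw [mul_div_assoc I, ofReal_mul_exp_mul_I_div_norm hpos] at htan
  rw [ofReal_mul_exp_mul_I_div_norm hpos] at hrad
  set e := exp (θ * I)
  set L := fderiv ℝ g ((r θ : ℂ) * e)
  have hdiff : DifferentiableAt ℝ g ((r θ : ℂ) * e) := hg
  have hzero : r' * L e + r θ * L (I * e) = 0 := by
    have := fderiv_apply_eq_zero_of_eventuallyEq_const
      (γ := fun t : ℝ => (r t : ℂ) * exp (t * I)) hdiff (hasDerivAt_ofReal_mul_exp_mul_I hr)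
      hlev
    rwa [← real_smul (x := r'), ← real_smul (x := r θ) (z := I * e), map_add, map_smul,
      map_smul, smul_eq_mul, smul_eq_mul] at this
  nlinarith [mul_le_mul_of_nonneg_left (abs_le.mp htan).1 hpos.le]

theorem le_mul_exp_of_hasDerivAt_le_mul {f f' : ℝ → ℝ} {K a b : ℝ} (hab : a ≤ b)
    (hf : ContinuousOn f (Icc a b)) (hderiv : ∀ x ∈ Ioo a b, HasDerivAt f (f' x) x)
    (hbound : ∀ x ∈ Ioo a b, f' x ≤ K * f x) :
    f b ≤ f a * Real.exp (K * (b - a)) := by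
  have hdamped : ∀ x ∈ Ioo a b, HasDerivAt (fun x => f x * Real.exp (-K * x))
      (f' x * Real.exp (-K * x) + f x * (Real.exp (-K * x) * -K)) x := fun x hx => by
    have hexp := ((hasDerivAt_id x).const_mul (-K)).exp
    simp only [id, mul_one] at hexp
    exact (hderiv x hx).mul hexp
  have hanti : AntitoneOn (fun x => f x * Real.exp (-K * x)) (Icc a b) := by
    refine antitoneOn_of_deriv_nonpos (convex_Icc a b) (hf.mul (by fun_prop)) ?_ ?_
    · rw [interior_Icc]
      exact fun x hx => (hdamped x hx).differentiableAt.differentiableWithinAt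
    · rw [interior_Icc]
      intro x hx
      rw [(hdamped x hx).deriv]
      nlinarith [hbound x hx, Real.exp_pos (-K * x)]
  have hle := hanti (left_mem_Icc.mpr hab) (right_mem_Icc.mpr hab) hab
  calc f b = f b * Real.exp (-K * b) * Real.exp (K * b) := by
        rw [mul_assoc, ← Real.exp_add]; simp
    _ ≤ f a * Real.exp (-K * a) * Real.exp (K * b) := by gcongr
    _ = f a * Real.exp (K * (b - a)) := by
        rw [mul_assoc, ← Real.exp_add]; ring_nf

theorem stmt8_general (α μ c θ₂ : ℝ) (hα : 0 < α)
    (hθ₂ : 0 ≤ θ₂) (hθ₂' : θ₂ ≤ 2 * Real.pi)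
    (g : ℂ → ℝ)
    (hg : ∀ z : ℂ, α ≤ ‖z‖ → ‖z‖ ≤ μ * α → DifferentiableAt ℝ g z)
    (hderiv : ∀ z : ℂ, α ≤ ‖z‖ → ‖z‖ ≤ μ * α →
      0 < fderiv ℝ g z (z / (‖z‖ : ℂ)) ∧
      |fderiv ℝ g z (Complex.I * z / (‖z‖ : ℂ))| ≤
        10 * fderiv ℝ g z (z / (‖z‖ : ℂ)))
    (r r' : ℝ → ℝ)
    (hr : ∀ θ ∈ Set.Icc 0 θ₂, HasDerivAt r (r' θ) θ)
    (hrange : ∀ θ ∈ Set.Icc 0 θ₂, α ≤ r θ ∧ r θ ≤ μ * α)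
    (hlev : ∀ θ ∈ Set.Icc 0 θ₂, g ((r θ : ℂ) * Complex.exp ((θ : ℂ) * Complex.I)) = c)
    (h0 : r 0 = α) :
    r θ₂ ≤ Real.exp (20 * Real.pi) * α := by
  have hgrowth : ∀ θ ∈ Ioo 0 θ₂, r' θ ≤ 10 * r θ := fun θ hθ => by
    have hθ' := Ioo_subset_Icc_self hθ
    obtain ⟨hlo, hhi⟩ := hrange θ hθ'
    have hpos := hα.trans_le hlo
    rw [← norm_ofReal_mul_exp_mul_I hpos.le θ] at hlo hhi
    exact deriv_le_of_polar_level_curve (hr θ hθ') hpos (hg _ hlo hhi) (hderiv _ hlo hhi)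
      (eventually_of_mem (Icc_mem_nhds hθ.1 hθ.2) hlev)
  have hgronwall := le_mul_exp_of_hasDerivAt_le_mul hθ₂
    (fun θ hθ => (hr θ hθ).continuousAt.continuousWithinAt)
    (fun θ hθ => hr θ (Ioo_subset_Icc_self hθ)) hgrowth
  calc r θ₂ ≤ α * Real.exp (10 * θ₂) := by simpa [h0] using hgronwall
    _ ≤ α * Real.exp (20 * Real.pi) := by gcongr α * ?_; exact Real.exp_le_exp.mpr (by linarith)
    _ = Real.exp (20 * Real.pi) * α := mul_comm _ _

/-- A level curve `r(θ)e^{iθ}` of a function `g` whose tangential derivative is controlled by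
ten times its (positive) radial derivative, starting on the circle `|z| = α`, satisfies
`r(θ₂) ≤ e^{20π}·α` within one full turn. -/
theorem stmt8 (α μ c θ₂ : ℝ) (hα : 0 < α) (hμ : 1 ≤ μ)
    (hθ₂ : 0 ≤ θ₂) (hθ₂' : θ₂ ≤ 2 * Real.pi)
    (g : ℂ → ℝ)
    (hg : ∀ z : ℂ, α ≤ ‖z‖ → ‖z‖ ≤ μ * α → DifferentiableAt ℝ g z)
    (hderiv : ∀ z : ℂ, α ≤ ‖z‖ → ‖z‖ ≤ μ * α →
      0 < fderiv ℝ g z (z / (‖z‖ : ℂ)) ∧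
      |fderiv ℝ g z (Complex.I * z / (‖z‖ : ℂ))| ≤
        10 * fderiv ℝ g z (z / (‖z‖ : ℂ)))
    (r r' : ℝ → ℝ)
    (hr : ∀ θ ∈ Set.Icc 0 θ₂, HasDerivAt r (r' θ) θ)
    (hr'c : ContinuousOn r' (Set.Icc 0 θ₂))
    (hrange : ∀ θ ∈ Set.Icc 0 θ₂, α ≤ r θ ∧ r θ ≤ μ * α)
    (hlev : ∀ θ ∈ Set.Icc 0 θ₂, g ((r θ : ℂ) * Complex.exp ((θ : ℂ) * Complex.I)) = c)
    (h0 : r 0 = α) :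
    r θ₂ ≤ Real.exp (20 * Real.pi) * α :=
  stmt8_general α μ c θ₂ hα hθ₂ hθ₂' g hg hderiv r r' hr hrange hlev h0
end
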